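/- arXiv:2207.07747 — 5 statements merged into one kernel-verified Lean document; each statement's English description precedes it below -/
import Mathlib

section
/- Let D ≥ 3, let β, γ ∈ ℝ, and let θ₀,…,θ_D be real numbers satisfying θ_{i-1} - βθ_i + θ_{i+1} = γ for 1 ≤ i ≤ D-1. Then there exists ϱ ∈ ℝ such that θ_{i-1}² - βθ_{i-1}θ_i + θ_i² - γ(θ_{i-1} + θ_i) = ϱ for all 1 ≤ i ≤ D. -/
/-!
The quadratic form `q(x, y) = x² - βxy + y² - γ(x + y)` satisfies
`q(y, z) - q(x, y) = (z - x)(x - βy + z - γ)`, so along a sequence obeying the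
`(β, γ)`-recurrence the value of `q` on consecutive pairs does not change.
-/

def recurrenceForm (β γ x y : ℝ) : ℝ := x ^ 2 - β * x * y + y ^ 2 - γ * (x + y)

theorem recurrenceForm_sub_recurrenceForm (β γ x y z : ℝ) :
    recurrenceForm β γ y z - recurrenceForm β γ x y = (z - x) * (x - β * y + z - γ) := by
  unfold recurrenceForm
  ring

theorem recurrenceForm_eq_of_add_eq {β γ x y z : ℝ} (h : x - β * y + z = γ) :
    recurrenceForm β γ y z = recurrenceForm β γ x y := by
  rw [← sub_eq_zero, recurrenceForm_sub_recurrenceForm, h, sub_self, mul_zero]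

theorem Nat.eq_of_succ_eq_on_Icc {α : Type*} {f : ℕ → α} {a b : ℕ}
    (h : ∀ i, a ≤ i → i < b → f (i + 1) = f i) : ∀ i, a ≤ i → i ≤ b → f i = f a := by
  intro i hai
  induction i, hai using Nat.le_induction with
  | base => exact fun _ => rfl
  | succ i hai ih => exact fun hib => (h i hai hib).trans (ih (by omega))

theorem stmt_2_general (D : ℕ) (β γ : ℝ) (θ : ℕ → ℝ)
    (hrec : ∀ i, 1 ≤ i → i ≤ D - 1 → θ (i - 1) - β * θ i + θ (i + 1) = γ) :
    ∃ ϱ : ℝ, ∀ i, 1 ≤ i → i ≤ D →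
      θ (i - 1) ^ 2 - β * θ (i - 1) * θ i + θ i ^ 2 - γ * (θ (i - 1) + θ i) = ϱ := by
  refine ⟨recurrenceForm β γ (θ 0) (θ 1),
    Nat.eq_of_succ_eq_on_Icc (f := fun i => recurrenceForm β γ (θ (i - 1)) (θ i)) ?_⟩
  intro i hi hiD
  simp only [Nat.add_sub_cancel]
  exact recurrenceForm_eq_of_add_eq (hrec i hi (by omega))

theorem stmt_2 (D : ℕ) (hD : 3 ≤ D) (β γ : ℝ) (θ : ℕ → ℝ)
    (hrec : ∀ i, 1 ≤ i → i ≤ D - 1 → θ (i - 1) - β * θ i + θ (i + 1) = γ) :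
    ∃ ϱ : ℝ, ∀ i, 1 ≤ i → i ≤ D →
      θ (i - 1) ^ 2 - β * θ (i - 1) * θ i + θ i ^ 2 - γ * (θ (i - 1) + θ i) = ϱ :=
  stmt_2_general D β γ θ hrec
end

section
/- Let Γ be a distance-regular graph with diameter D ≥ 3 and Krein parameters q^h_{i,j} defined by E_i ∘ E_j = |X|⁻¹ Σ_h q^h_{i,j} E_h, where ∘ is entrywise multiplication. Then q^h_{i,j} ≥ 0 for all 0 ≤ h, i, j ≤ D. -/
/-!
Each primitive idempotent `E k` is a nonzero orthogonal projection, hence positive semidefinite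
with positive trace. By the Schur product theorem `E i ⊙ E j` is positive semidefinite, so
`trace ((E i ⊙ E j) * E h) = trace (E h * (E i ⊙ E j) * E h) ≥ 0`. Orthogonality of the `E`'s
turns the left side into `|X|⁻¹ * q h i j * trace (E h)`. That no `E h` vanishes is a dimension
count: the `D + 1` distance matrices are linearly independent and lie in the span of the `E`'s.
-/

open Matrix Finset

theorem SimpleGraph.Reachable.exists_dist_eq_of_le {V : Type*} {G : SimpleGraph V} {u v : V}
    (h : G.Reachable u v) {l : ℕ} (hl : l ≤ G.dist u v) : ∃ w, G.dist u w = l := by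
  obtain ⟨p, hp⟩ := h.exists_walk_length_eq_dist
  refine ⟨p.getVert l, ?_⟩
  have := G.length_eq_dist_of_subwalk hp (p.isSubwalk_take l)
  rw [SimpleGraph.Walk.take_length] at this
  omega

theorem SimpleGraph.linearIndependent_distMatrix {X R : Type*} [Ring R] [Nontrivial R]
    (G : SimpleGraph X) (D : ℕ) (hD : ∀ l ≤ D, ∃ y z, G.dist y z = l) :
    LinearIndependent R fun l : Fin (D + 1) =>
      (of fun y z => if G.dist y z = l then 1 else 0 : Matrix X X R) := by
  rw [Fintype.linearIndependent_iff]
  intro c hc l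
  obtain ⟨y, z, hyz⟩ := hD l (Nat.lt_succ_iff.mp l.isLt)
  simpa [Matrix.sum_apply, hyz, Fin.val_inj] using congrFun (congrFun hc y) z

theorem LinearIndependent.of_forall_mem_span_range {K V ι : Type*} [DivisionRing K]
    [AddCommGroup V] [Module K V] [Fintype ι] {v w : ι → V} (hv : LinearIndependent K v)
    (hvw : ∀ i, v i ∈ Submodule.span K (Set.range w)) : LinearIndependent K w := by
  have : FiniteDimensional K (Submodule.span K (Set.range w)) :=
    .span_of_finite K (Set.finite_range w)
  rw [linearIndependent_iff_card_le_finrank_span, linearIndependent_iff_card_eq_finrank_span.mp hv]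
  exact Submodule.finrank_mono (Submodule.span_le.mpr (Set.range_subset_iff.mpr hvw))

theorem setOf_exists_le_eq_range {α : Type*} (f : ℕ → α) (D : ℕ) :
    {b | ∃ l ≤ D, b = f l} = Set.range fun l : Fin (D + 1) => f l := by
  ext b
  constructor
  · rintro ⟨l, hl, rfl⟩
    exact ⟨⟨l, by omega⟩, rfl⟩
  · rintro ⟨l, rfl⟩
    exact ⟨l, by omega, rfl⟩

theorem Finset.sum_smul_mul_of_orthogonal {R A ι : Type*} [Semiring R]
    [NonUnitalNonAssocSemiring A] [Module R A] [IsScalarTower R A A] [DecidableEq ι]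
    {s : Finset ι} {e : ι → A} {j : ι} (hj : j ∈ s)
    (horth : ∀ i ∈ s, e i * e j = if i = j then e i else 0) (c : ι → R) :
    (∑ i ∈ s, c i • e i) * e j = c j • e j := by
  rw [Finset.sum_mul, Finset.sum_eq_single j]
  · rw [smul_mul_assoc, horth j hj, if_pos rfl]
  · intro i hi hij
    rw [smul_mul_assoc, horth i hi, if_neg hij, smul_zero]
  · exact fun hj' => absurd hj hj'

namespace Matrix

variable {n 𝕜 : Type*} [Fintype n] [RCLike 𝕜] {P : Matrix n n 𝕜}

open scoped ComplexOrder

theorem IsHermitian.posSemidef_of_isIdempotentElem (hself : P.IsHermitian)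
    (hidem : IsIdempotentElem P) : P.PosSemidef := by
  simpa only [hself.eq, hidem.eq] using posSemidef_conjTranspose_mul_self P

theorem PosSemidef.trace_mul_nonneg_of_isIdempotentElem {M : Matrix n n 𝕜} (hM : M.PosSemidef)
    (hself : P.IsHermitian) (hidem : IsIdempotentElem P) : 0 ≤ (M * P).trace := by
  have : (M * P).trace = (Pᴴ * M * P).trace := by
    rw [hself.eq, mul_assoc, trace_mul_comm P, mul_assoc, hidem.eq]
  rw [this]
  exact (hM.conjTranspose_mul_mul_same P).trace_nonneg

theorem IsHermitian.trace_pos_of_isIdempotentElem (hself : P.IsHermitian)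
    (hidem : IsIdempotentElem P) (hP : P ≠ 0) : 0 < P.trace := by
  have htrace : P.trace = (Pᴴ * P).trace := by rw [hself.eq, hidem.eq]
  rw [htrace]
  exact lt_of_le_of_ne (posSemidef_conjTranspose_mul_self P).trace_nonneg
    (Ne.symm (trace_conjTranspose_mul_self_eq_zero_iff.not.mpr hP))

theorem nonneg_of_hadamard_mul_eq_smul {E F : Matrix n n 𝕜} {c : 𝕜}
    (hE : E.IsHermitian) (hE' : IsIdempotentElem E) (hF : F.IsHermitian)
    (hF' : IsIdempotentElem F) (hP : P.IsHermitian) (hP' : IsIdempotentElem P) (hP0 : P ≠ 0)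
    (h : (E ⊙ F) * P = c • P) : 0 ≤ c := by
  have hnonneg := ((hE.posSemidef_of_isIdempotentElem hE').hadamard
    (hF.posSemidef_of_isIdempotentElem hF')).trace_mul_nonneg_of_isIdempotentElem hP hP'
  rw [h, trace_smul, smul_eq_mul] at hnonneg
  have htrace := hP.trace_pos_of_isIdempotentElem hP' hP0
  simpa only [mul_inv_cancel_right₀ htrace.ne'] using mul_nonneg hnonneg (inv_pos.mpr htrace).le

end Matrix

theorem stmt_16_general (X : Type) [Fintype X]
    (G : SimpleGraph X) (hconn : G.Connected)
    (D : ℕ)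
    (hdiam' : ∃ y z : X, G.dist y z = D)
    (A : ℕ → Matrix X X ℝ)
    (hA : ∀ i, A i = Matrix.of fun y z => if G.dist y z = i then (1 : ℝ) else 0)
    (E : ℕ → Matrix X X ℝ)
    (hEsymm : ∀ i ≤ D, (E i)ᵀ = E i)
    (hEmul : ∀ i ≤ D, ∀ j ≤ D, E i * E j = if i = j then E i else 0)
    (hAspan : ∀ i ≤ D, A i ∈ Submodule.span ℝ {B : Matrix X X ℝ | ∃ l ≤ D, B = E l})
    (q : ℕ → ℕ → ℕ → ℝ)
    (hq : ∀ i ≤ D, ∀ j ≤ D, Matrix.hadamard (E i) (E j) =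
      ((Fintype.card X : ℝ))⁻¹ • ∑ h ∈ Finset.range (D + 1), q h i j • E h) :
    ∀ h ≤ D, ∀ i ≤ D, ∀ j ≤ D, 0 ≤ q h i j := by
  obtain ⟨y₀, z₀, hdist⟩ := hdiam'
  have hdist_le : ∀ l ≤ D, ∃ y z, G.dist y z = l := fun l hl =>
    ⟨y₀, (hconn y₀ z₀).exists_dist_eq_of_le (hdist.symm ▸ hl)⟩
  have hE_indep : LinearIndependent ℝ fun l : Fin (D + 1) => E l := by
    refine (G.linearIndependent_distMatrix (R := ℝ) D hdist_le).of_forall_mem_span_range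
      fun l => ?_
    simpa only [hA, setOf_exists_le_eq_range] using hAspan l (Nat.lt_succ_iff.mp l.isLt)
  have hherm : ∀ k ≤ D, (E k).IsHermitian := fun k hk =>
    (conjTranspose_eq_transpose_of_trivial (E k)).trans (hEsymm k hk)
  have hidem : ∀ k ≤ D, IsIdempotentElem (E k) := fun k hk =>
    (hEmul k hk k hk).trans (if_pos rfl)
  intro h hh i hi j hj
  have hmul : (E i ⊙ E j) * E h = ((Fintype.card X : ℝ)⁻¹ * q h i j) • E h := by
    rw [hq i hi j hj, smul_mul_assoc, Finset.sum_smul_mul_of_orthogonal (by simpa using hh)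
      (fun k hk => hEmul k (by simpa using hk) h hh), smul_smul]
  have hcoef := nonneg_of_hadamard_mul_eq_smul (hherm i hi) (hidem i hi) (hherm j hj)
    (hidem j hj) (hherm h hh) (hidem h hh) (hE_indep.ne_zero ⟨h, by omega⟩) hmul
  have : Nonempty X := ⟨y₀⟩
  exact nonneg_of_mul_nonneg_right hcoef (inv_pos.mpr (by exact_mod_cast Fintype.card_pos))

theorem stmt_16 (X : Type) [Fintype X] [DecidableEq X]
    (G : SimpleGraph X) (hconn : G.Connected)
    (D : ℕ) (hD : 3 ≤ D)
    (hdiam : ∀ y z : X, G.dist y z ≤ D)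
    (hdiam' : ∃ y z : X, G.dist y z = D)
    (p : ℕ → ℕ → ℕ → ℕ)
    (hp : ∀ h i j, h ≤ D → i ≤ D → j ≤ D → ∀ y z : X, G.dist y z = h →
      (Finset.univ.filter fun w => G.dist y w = i ∧ G.dist z w = j).card = p h i j)
    (A : ℕ → Matrix X X ℝ)
    (hA : ∀ i, A i = Matrix.of fun y z => if G.dist y z = i then (1 : ℝ) else 0)
    (E : ℕ → Matrix X X ℝ)
    (hEsymm : ∀ i ≤ D, (E i)ᵀ = E i)
    (hEmul : ∀ i ≤ D, ∀ j ≤ D, E i * E j = if i = j then E i else 0)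
    (hEsum : ∑ i ∈ Finset.range (D + 1), E i = 1)
    (hE0 : E 0 = ((Fintype.card X : ℝ))⁻¹ • Matrix.of (fun _ _ => (1 : ℝ)))
    (hEspan : ∀ i ≤ D, E i ∈ Submodule.span ℝ {B : Matrix X X ℝ | ∃ l ≤ D, B = A l})
    (hAspan : ∀ i ≤ D, A i ∈ Submodule.span ℝ {B : Matrix X X ℝ | ∃ l ≤ D, B = E l})
    (q : ℕ → ℕ → ℕ → ℝ)
    (hq : ∀ i ≤ D, ∀ j ≤ D, Matrix.hadamard (E i) (E j) =
      ((Fintype.card X : ℝ))⁻¹ • ∑ h ∈ Finset.range (D + 1), q h i j • E h) :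
    ∀ h ≤ D, ∀ i ≤ D, ∀ j ≤ D, 0 ≤ q h i j :=
  stmt_16_general X G hconn D hdiam' A hA E hEsymm hEmul hAspan q hq
end

section
/- Let V be a nonzero finite-dimensional vector space over a field F, and let A : V → V be diagonalizable with all eigenspaces of dimension one. If B : V → V is a linear map commuting with A, then B is a polynomial in A. -/
/-!
Since `B` commutes with `A`, it maps every eigenspace of `A` into itself; an eigenspace is a line,
so `B` acts on the eigenspace of `μ` as a scalar `c μ`. There are only finitely many eigenvalues,
so Lagrange interpolation gives a polynomial `f` with `f(μ) = c μ` at each of them. Then `f(A)` and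
`B` agree on every eigenspace, and the eigenspaces span `V`.
-/

open Module End Polynomial

theorem Submodule.exists_forall_apply_eq_smul_of_finrank_eq_one {K V : Type*} [Field K]
    [AddCommGroup V] [Module K V] {p : Submodule K V} (hp : finrank K p = 1) (B : End K V)
    (hB : ∀ x ∈ p, B x ∈ p) : ∃ c : K, ∀ x ∈ p, B x = c • x := by
  obtain ⟨c, hc, -⟩ := (B.restrict hB).existsUnique_eq_smul_id_of_finrank_eq_one hp
  exact ⟨c, fun x hx => congrArg Subtype.val (LinearMap.congr_fun hc ⟨x, hx⟩)⟩

theorem Module.End.exists_forall_apply_eq_smul_of_commute {K V : Type*} [Field K]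
    [AddCommGroup V] [Module K V] {A B : End K V} (hcomm : Commute A B) (μ : K)
    (hone : A.HasEigenvalue μ → finrank K (A.eigenspace μ) = 1) :
    ∃ c : K, ∀ x ∈ A.eigenspace μ, B x = c • x := by
  by_cases hμ : A.HasEigenvalue μ
  · exact Submodule.exists_forall_apply_eq_smul_of_finrank_eq_one (hone hμ) B
      fun x hx => mapsTo_genEigenspace_of_comm hcomm μ 1 hx
  · refine ⟨0, fun x hx => ?_⟩
    rw [hasEigenvalue_iff, not_not] at hμ
    rw [hμ, Submodule.mem_bot] at hx
    simp [hx]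

theorem Module.End.exists_eq_aeval_of_forall_apply_eq_smul {K V : Type*} [Field K]
    [AddCommGroup V] [Module K V] [FiniteDimensional K V] {A B : End K V}
    (hdiag : ⨆ μ, A.eigenspace μ = ⊤) (c : K → K)
    (hB : ∀ μ, ∀ x ∈ A.eigenspace μ, B x = c μ • x) : ∃ f : K[X], B = aeval A f := by
  classical
  set E := A.finite_hasEigenvalue.toFinset
  refine ⟨Lagrange.interpolate E id c, LinearMap.ext_on (s := ⋃ μ, A.eigenspace μ) ?_ ?_⟩
  · rw [← Submodule.iSup_eq_span, hdiag]
  · intro x hx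
    obtain ⟨μ, hxμ⟩ := Set.mem_iUnion.mp hx
    by_cases hx0 : x = 0
    · simp [hx0]
    have hvec : A.HasEigenvector μ x := ⟨hxμ, hx0⟩
    have hμE : μ ∈ E := Set.Finite.mem_toFinset _ |>.mpr (hasEigenvalue_of_hasEigenvector hvec)
    rw [hB μ x hxμ, aeval_apply_of_hasEigenvector hvec]
    exact congrArg (· • x) (Lagrange.eval_interpolate_at_node c (Set.injOn_id _) hμE).symm

theorem stmt_17_general (F : Type) [Field F] (V : Type) [AddCommGroup V] [Module F V]
    [FiniteDimensional F V]
    (A B : Module.End F V)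
    (hdiag : (⨆ μ : F, Module.End.eigenspace A μ) = ⊤)
    (hone : ∀ μ : F, Module.End.HasEigenvalue A μ →
      Module.finrank F (Module.End.eigenspace A μ) = 1)
    (hcomm : A * B = B * A) :
    ∃ f : Polynomial F, B = Polynomial.aeval A f := by
  choose c hc using fun μ => exists_forall_apply_eq_smul_of_commute hcomm μ (hone μ)
  exact exists_eq_aeval_of_forall_apply_eq_smul hdiag c hc

theorem stmt_17 (F : Type) [Field F] (V : Type) [AddCommGroup V] [Module F V]
    [FiniteDimensional F V] [Nontrivial V]
    (A B : Module.End F V)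
    (hdiag : (⨆ μ : F, Module.End.eigenspace A μ) = ⊤)
    (hone : ∀ μ : F, Module.End.HasEigenvalue A μ →
      Module.finrank F (Module.End.eigenspace A μ) = 1)
    (hcomm : A * B = B * A) :
    ∃ f : Polynomial F, B = Polynomial.aeval A f :=
  stmt_17_general F V A B hdiag hone hcomm
end

section
/- Let Γ be a distance-regular graph with diameter D ≥ 3, fix x ∈ X, and let A* and the dual eigenvalues θ*₀,…,θ*_D be given, with Q-polynomial ordering, so that A* = Σ_i θ*_i E*_i. Then for 0 ≤ i, j, r, s ≤ D: E*_i A^r A* A^s E*_j equals θ*_{j+s} E*_i A^{r+s} E*_j if r+s = i-j, equals θ*_{j-s} E*_i A^{r+s} E*_j if r+s = j-i, and equals 0 if r+s < |i-j|. -/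
/-!
`E*_h` is the diagonal projection onto the vertices at distance `h` from `x`, and `A*` is the
diagonal matrix with entry `θ*_{∂(x,w)}` at `w`. Hence the `(y, z)` entry of
`E*_i A^r A* A^s E*_j` is the sum, over pairs of walks `y → w` of length `r` and `w → z` of
length `s`, of `θ*_{∂(x,w)}`. A walk of length `r` changes the distance to `x` by
at most `r`, so for `∂(x,y) = i`, `∂(x,z) = j` every contributing `w` lies within `r` of `i` and
within `s` of `j`. If `r + s = i - j` this forces `∂(x,w) = j + s`, if `r + s = j - i` it forces
`∂(x,w) = j - s`, and if `r + s < |i - j|` there is no such `w`.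
-/

open Matrix Finset

theorem Matrix.mul_diagonal_mul_apply_of_forall {l m n α : Type*} [Fintype m] [DecidableEq m]
    [CommSemiring α] {M : Matrix l m α} {N : Matrix m n α} {f : m → α} {c : α} {y : l} {z : n}
    (h : ∀ w, M y w ≠ 0 → N w z ≠ 0 → f w = c) :
    (M * diagonal f * N) y z = c * (M * N) y z := by
  rw [mul_apply, mul_apply, Finset.mul_sum]
  simp only [mul_diagonal]
  refine Finset.sum_congr rfl fun w _ => ?_
  by_cases hM : M y w = 0
  · simp [hM]
  by_cases hN : N w z = 0
  · simp [hN]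
  rw [h w hM hN]
  ring

namespace SimpleGraph

variable {V α : Type*} (G : SimpleGraph V)

section Walks

variable [Fintype V] [DecidableEq V] [DecidableRel G.Adj] [Semiring α]

theorem exists_walk_of_adjMatrix_pow_apply_ne_zero {r : ℕ} {u v : V}
    (h : (G.adjMatrix α ^ r) u v ≠ 0) : ∃ p : G.Walk u v, p.length = r := by
  rw [adjMatrix_pow_apply_eq_card_walk] at h
  obtain ⟨⟨p, hp⟩⟩ :=
    Fintype.card_pos_iff.mp <| Nat.pos_of_ne_zero fun hc => h (by rw [hc, Nat.cast_zero])
  exact ⟨p, hp⟩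

theorem dist_le_add_of_adjMatrix_pow_apply_ne_zero {r : ℕ} {u v : V}
    (h : (G.adjMatrix α ^ r) u v ≠ 0) (x : V) :
    G.dist x v ≤ G.dist x u + r ∧ G.dist x u ≤ G.dist x v + r := by
  obtain ⟨p, hp⟩ := G.exists_walk_of_adjMatrix_pow_apply_ne_zero h
  have huv : G.dist u v ≤ r := hp ▸ dist_le p
  have hvu : G.dist v u ≤ r := dist_comm (G := G) ▸ huv
  exact ⟨(p.reachable.dist_triangle_right x).trans (by omega),
    (p.reachable.symm.dist_triangle_right x).trans (by omega)⟩

end Walks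

section DualIdempotent

variable [DecidableEq V]

variable (α) in
noncomputable def dualIdempotent [Zero α] [One α] (x : V) (i : ℕ) : Matrix V V α :=
  diagonal fun y => if G.dist x y = i then 1 else 0

variable (x : V)

theorem sum_smul_dualIdempotent [NonAssocSemiring α] {D : ℕ} (hD : ∀ y, G.dist x y ≤ D)
    (θ : ℕ → α) :
    ∑ h ∈ range (D + 1), θ h • G.dualIdempotent α x h = diagonal fun y => θ (G.dist x y) := by
  ext y z
  obtain rfl | hyz := eq_or_ne y z
  · simp [Matrix.sum_apply, dualIdempotent, Nat.lt_succ_iff.mpr (hD y)]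
  · simp [Matrix.sum_apply, dualIdempotent, hyz]

variable [Fintype V]

theorem dualIdempotent_mul_mul_dualIdempotent_apply [NonAssocSemiring α] (M : Matrix V V α)
    (i j : ℕ) (y z : V) :
    (G.dualIdempotent α x i * M * G.dualIdempotent α x j) y z =
      if G.dist x y = i ∧ G.dist x z = j then M y z else 0 := by
  simp only [dualIdempotent, diagonal_mul, mul_diagonal]
  split_ifs <;> simp_all

theorem dualIdempotent_mul_pow_mul_diagonal_mul_pow_mul_dualIdempotent [CommSemiring α]
    [DecidableRel G.Adj] {i j r s : ℕ} {f : V → α} {c : α}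
    (hf : ∀ w, i ≤ G.dist x w + r → G.dist x w ≤ i + r → j ≤ G.dist x w + s →
      G.dist x w ≤ j + s → f w = c) :
    G.dualIdempotent α x i * G.adjMatrix α ^ r * diagonal f * G.adjMatrix α ^ s *
        G.dualIdempotent α x j =
      c • (G.dualIdempotent α x i * G.adjMatrix α ^ (r + s) * G.dualIdempotent α x j) := by
  ext y z
  rw [Matrix.smul_apply, show G.dualIdempotent α x i * G.adjMatrix α ^ r * diagonal f *
      G.adjMatrix α ^ s * G.dualIdempotent α x j = G.dualIdempotent α x i *
      (G.adjMatrix α ^ r * diagonal f * G.adjMatrix α ^ s) * G.dualIdempotent α x j by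
    simp only [Matrix.mul_assoc],
    dualIdempotent_mul_mul_dualIdempotent_apply, dualIdempotent_mul_mul_dualIdempotent_apply]
  split_ifs with hyz
  · rw [pow_add, smul_eq_mul]
    refine Matrix.mul_diagonal_mul_apply_of_forall fun w hyw hwz => ?_
    have := G.dist_le_add_of_adjMatrix_pow_apply_ne_zero hyw x
    have := G.dist_le_add_of_adjMatrix_pow_apply_ne_zero hwz x
    exact hf w (by omega) (by omega) (by omega) (by omega)
  · rw [smul_zero]

end DualIdempotent

end SimpleGraph

theorem stmt_18_general (X : Type) [Fintype X] [DecidableEq X]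
    (G : SimpleGraph X)
    (D : ℕ)
    (hdiam : ∀ y z : X, G.dist y z ≤ D)
    (A : ℕ → Matrix X X ℝ)
    (hA : ∀ i, A i = Matrix.of fun y z => if G.dist y z = i then (1 : ℝ) else 0)
    (x : X) (Estar : ℕ → Matrix X X ℝ)
    (hEstar : ∀ i, Estar i =
      Matrix.diagonal (fun y => if G.dist x y = i then (1 : ℝ) else 0))
    (θs : ℕ → ℝ)
    (Astar : Matrix X X ℝ)
    (hAstar : Astar = ∑ h ∈ Finset.range (D + 1), θs h • Estar h) :
    ∀ i ≤ D, ∀ j ≤ D, ∀ r ≤ D, ∀ s ≤ D,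
      (((r : ℤ) + s = (i : ℤ) - j →
        Estar i * (A 1) ^ r * Astar * (A 1) ^ s * Estar j =
          θs (j + s) • (Estar i * (A 1) ^ (r + s) * Estar j)) ∧
      ((r : ℤ) + s = (j : ℤ) - i →
        Estar i * (A 1) ^ r * Astar * (A 1) ^ s * Estar j =
          θs (j - s) • (Estar i * (A 1) ^ (r + s) * Estar j)) ∧
      ((r : ℤ) + s < |(i : ℤ) - (j : ℤ)| →
        Estar i * (A 1) ^ r * Astar * (A 1) ^ s * Estar j = 0)) := by
  classical
  intro i _ j _ r _ s _
  have hE : Estar = G.dualIdempotent ℝ x := funext hEstar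
  have hA1 : A 1 = G.adjMatrix ℝ := by
    ext y z
    simp [hA, SimpleGraph.dist_eq_one_iff_adj]
  rw [hAstar, hE, G.sum_smul_dualIdempotent x (hdiam x), hA1]
  refine ⟨fun hij => ?_, fun hji => ?_, fun hlt => ?_⟩
  · exact G.dualIdempotent_mul_pow_mul_diagonal_mul_pow_mul_dualIdempotent x
      fun w _ _ _ _ => congrArg θs (by omega)
  · exact G.dualIdempotent_mul_pow_mul_diagonal_mul_pow_mul_dualIdempotent x
      fun w _ _ _ _ => congrArg θs (by omega)
  · rw [G.dualIdempotent_mul_pow_mul_diagonal_mul_pow_mul_dualIdempotent x (c := 0)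
      fun w _ _ _ _ => by cases lt_abs.mp hlt <;> omega, zero_smul]

theorem stmt_18 (X : Type) [Fintype X] [DecidableEq X]
    (G : SimpleGraph X) (hconn : G.Connected)
    (D : ℕ) (hD : 3 ≤ D)
    (hdiam : ∀ y z : X, G.dist y z ≤ D)
    (hdiam' : ∃ y z : X, G.dist y z = D)
    (p : ℕ → ℕ → ℕ → ℕ)
    (hp : ∀ h i j, h ≤ D → i ≤ D → j ≤ D → ∀ y z : X, G.dist y z = h →
      (Finset.univ.filter fun w => G.dist y w = i ∧ G.dist z w = j).card = p h i j)
    (A : ℕ → Matrix X X ℝ)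
    (hA : ∀ i, A i = Matrix.of fun y z => if G.dist y z = i then (1 : ℝ) else 0)
    (x : X) (Estar : ℕ → Matrix X X ℝ)
    (hEstar : ∀ i, Estar i =
      Matrix.diagonal (fun y => if G.dist x y = i then (1 : ℝ) else 0))
    (θs : ℕ → ℝ)
    (hdist : ∀ h ≤ D, ∀ h' ≤ D, h ≠ h' → θs h ≠ θs h')
    (Astar : Matrix X X ℝ)
    (hAstar : Astar = ∑ h ∈ Finset.range (D + 1), θs h • Estar h) :
    ∀ i ≤ D, ∀ j ≤ D, ∀ r ≤ D, ∀ s ≤ D,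
      (((r : ℤ) + s = (i : ℤ) - j →
        Estar i * (A 1) ^ r * Astar * (A 1) ^ s * Estar j =
          θs (j + s) • (Estar i * (A 1) ^ (r + s) * Estar j)) ∧
      ((r : ℤ) + s = (j : ℤ) - i →
        Estar i * (A 1) ^ r * Astar * (A 1) ^ s * Estar j =
          θs (j - s) • (Estar i * (A 1) ^ (r + s) * Estar j)) ∧
      ((r : ℤ) + s < |(i : ℤ) - (j : ℤ)| →
        Estar i * (A 1) ^ r * Astar * (A 1) ^ s * Estar j = 0)) :=
  stmt_18_general X G D hdiam A hA x Estar hEstar θs Astar hAstar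
end

section
/- Let Γ be a distance-regular graph with diameter D ≥ 3 having classical parameters (D, b, α, σ). Then θ = b₁/b - 1 is an eigenvalue of Γ, where b₁ is the intersection number; specifically, the sequence σ_i = 1 + (θ/k - 1)·[i choose 1]_b · b^{1-i} (0 ≤ i ≤ D) satisfies σ₀ = 1, σ₁ = θ/k, c_iσ_{i-1} + a_iσ_i + b_iσ_{i+1} = θσ_i for 1 ≤ i ≤ D-1, and c_Dσ_{D-1} + a_Dσ_D = θσ_D. -/
open Matrix Finset

/-!
The neighbours of a vertex at distance `i ≥ 1` from `y₀` split into `cᵢ`, `aᵢ`, `bᵢ` vertices at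
distance `i - 1`, `i`, `i + 1` from `y₀`, so `v ↦ σ (dist y₀ v)` is an eigenvector of the adjacency
matrix for `θ` once `σ` satisfies the three-term recurrence with `aᵢ = k - cᵢ - bᵢ`.
For `σᵢ = 1 + t [i] β^(1-i)` the differences `σᵢ₊₁ - σᵢ = t β^(-i)` turn that recurrence into
`bᵢ - β cᵢ = k βⁱ + (θ - k) β [i]`, which is exactly what the classical parameters give.
-/

theorem geom_sum_mul_zpow_one_sub_succ_sub {K : Type*} [Field K] {β : K} (hβ : β ≠ 0) (n : ℕ) :
    (∑ l ∈ range (n + 1), β ^ l) * β ^ ((1 : ℤ) - (n + 1 : ℕ)) -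
      (∑ l ∈ range n, β ^ l) * β ^ ((1 : ℤ) - n) = β ^ (-(n : ℤ)) := by
  rw [geom_sum_succ, show (1 : ℤ) - (n + 1 : ℕ) = -n by push_cast; ring, sub_eq_add_neg (1 : ℤ),
    zpow_add₀ hβ, zpow_one]
  ring

theorem classical_b_sub_mul_c {K : Type*} [Field K] {c b : ℕ → K} {β α σ θ : K} {D : ℕ}
    (hc : ∀ i ≤ D, c i = (∑ l ∈ range i, β ^ l) * (1 + α * ∑ l ∈ range (i - 1), β ^ l))
    (hb : ∀ i ≤ D, b i = ((∑ l ∈ range D, β ^ l) - ∑ l ∈ range i, β ^ l) *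
      (σ - α * ∑ l ∈ range i, β ^ l))
    (hθ : θ * β = b 1 - β) {i : ℕ} (hi : 1 ≤ i) (hiD : i ≤ D) :
    b i - β * c i = b 0 * β ^ i + (θ - b 0) * β * ∑ l ∈ range i, β ^ l := by
  obtain ⟨j, rfl⟩ : ∃ j, i = j + 1 := ⟨i - 1, by omega⟩
  have hpow : β ^ j = (∑ l ∈ range j, β ^ l) * (β - 1) + 1 := by rw [geom_sum_mul]; ring
  rw [hb 1 (by omega)] at hθ
  rw [hb _ hiD, hc _ hiD, hb 0 (by omega), Nat.add_sub_cancel, geom_sum_succ, pow_succ, hpow]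
  simp only [range_zero, sum_range_one, sum_empty, pow_zero] at hθ ⊢
  linear_combination (-(β * ∑ l ∈ range j, β ^ l) - 1) * hθ

theorem classical_cosine_recurrence {K : Type*} [Field K] {β k θ cᵢ bᵢ : K} (hβ : β ≠ 0)
    (hk : k ≠ 0) (σs : ℕ → K)
    (hσs : ∀ i, σs i = 1 + (θ / k - 1) * (∑ l ∈ range i, β ^ l) * β ^ ((1 : ℤ) - i))
    {i : ℕ} (hi : 1 ≤ i)
    (hbc : bᵢ - β * cᵢ = k * β ^ i + (θ - k) * β * ∑ l ∈ range i, β ^ l) :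
    cᵢ * σs (i - 1) + (k - cᵢ - bᵢ) * σs i + bᵢ * σs (i + 1) = θ * σs i := by
  obtain ⟨j, rfl⟩ : ∃ j, i = j + 1 := ⟨i - 1, by omega⟩
  set t := θ / k - 1
  have hkt : k * t = θ - k := by simp only [t]; field_simp
  have step : ∀ n, σs (n + 1) - σs n = t * β ^ (-(n : ℤ)) := fun n => by
    rw [hσs, hσs, ← geom_sum_mul_zpow_one_sub_succ_sub hβ n]; ring
  have hshift : β ^ (-(j : ℤ)) = β * β ^ (-((j + 1 : ℕ) : ℤ)) := by
    rw [← zpow_one_add₀ hβ]; push_cast; ring_nf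
  have hinv : β ^ (j + 1) * β ^ (-((j + 1 : ℕ) : ℤ)) = 1 := by
    rw [← zpow_natCast, ← zpow_add₀ hβ]; simp
  have hσ : σs (j + 1) = 1 + t * (∑ l ∈ range (j + 1), β ^ l) * β ^ (-(j : ℤ)) := by
    rw [hσs]; push_cast; ring_nf
  rw [Nat.add_sub_cancel]
  linear_combination (-cᵢ) * step j + bᵢ * step (j + 1) + t * β ^ (-((j + 1 : ℕ) : ℤ)) * hbc +
    (k - θ) * hσ - (cᵢ * t + (θ - k) * t * ∑ l ∈ range (j + 1), β ^ l) * hshift + k * t * hinv + hkt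

namespace SimpleGraph

variable {X : Type*} {G : SimpleGraph X}

theorem Connected.exists_dist_eq_of_le (hconn : G.Connected) {y z : X} {i : ℕ}
    (hi : i ≤ G.dist y z) : ∃ w, G.dist y w = i := by
  obtain ⟨p, hp⟩ := hconn.exists_walk_length_eq_dist y z
  refine ⟨p.getVert i, le_antisymm ?_ ?_⟩
  · calc G.dist y (p.getVert i) ≤ (p.take i).length := dist_le _
      _ ≤ i := by rw [Walk.take_length]; exact min_le_left _ _
  · have hdrop : G.dist (p.getVert i) z ≤ p.length - i := by
      rw [← Walk.drop_length]; exact dist_le _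
    have := hconn.dist_triangle (u := y) (v := p.getVert i) (w := z)
    omega

variable [Fintype X]

theorem sum_filter_dist_eq_one_comp_dist {R : Type*} [NonAssocSemiring R] (f : ℕ → R)
    {y z : X} {i : ℕ} (hyz : G.dist y z = i) (hi : 1 ≤ i) :
    ∑ w with G.dist y w = 1, f (G.dist z w) =
      (#{w | G.dist y w = 1 ∧ G.dist z w = i - 1} : R) * f (i - 1) +
        (#{w | G.dist y w = 1 ∧ G.dist z w = i} : R) * f i +
        (#{w | G.dist y w = 1 ∧ G.dist z w = i + 1} : R) * f (i + 1) := by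
  have hmaps : ∀ w ∈ ({w | G.dist y w = 1} : Finset X),
      G.dist z w ∈ ({i - 1, i, i + 1} : Finset ℕ) := by
    intro w hw
    have hadj : G.Adj y w := dist_eq_one_iff_adj.mp (mem_filter.mp hw).2
    rw [← hyz, dist_comm (u := y)]
    simpa [or_comm, or_left_comm] using hadj.diff_dist_adj (u := z)
  have hlayer : ∀ j, ∑ w with G.dist y w = 1 ∧ G.dist z w = j, f (G.dist z w) =
      (#{w | G.dist y w = 1 ∧ G.dist z w = j} : R) * f j := fun j => by
    rw [sum_congr rfl fun w hw => by rw [(mem_filter.mp hw).2.2], sum_const, nsmul_eq_mul]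
  rw [← sum_fiberwise_of_maps_to hmaps, sum_insert (by simp; omega), sum_insert (by simp),
    sum_singleton]
  simp only [filter_filter, hlayer, add_assoc]

section IntersectionNumbers

variable {D : ℕ} {p : ℕ → ℕ → ℕ → ℕ}
  (hp : ∀ h i j, h ≤ D → i ≤ D → j ≤ D → ∀ y z : X, G.dist y z = h →
    #{w | G.dist y w = i ∧ G.dist z w = j} = p h i j)
include hp

theorem card_filter_dist_eq_one (hD : 1 ≤ D) (y : X) : #{w | G.dist y w = 1} = p 0 1 1 := by
  simpa only [and_self] using hp 0 1 1 (by omega) hD hD y y dist_self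

theorem intersection_zero_one_one_pos (hconn : G.Connected) (hD : 1 ≤ D) {y z : X}
    (hyz : G.dist y z = D) : 0 < p 0 1 1 := by
  obtain ⟨w, hw⟩ := hconn.exists_dist_eq_of_le (y := y) (z := z) (i := 1) (by omega)
  rw [← card_filter_dist_eq_one hp hD y]
  exact card_pos.mpr ⟨w, by simpa using hw⟩

variable {R : Type*} [CommSemiring R] {c a b : ℕ → R}
  (hc : ∀ i ≤ D, c i = (p i 1 (i - 1) : R)) (ha : ∀ i ≤ D, a i = (p i 1 i : R))
  (hb : ∀ i ≤ D, b i = (p i 1 (i + 1) : R))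
include hc ha hb

theorem sum_filter_dist_eq_one_comp_dist_eq_intersection (hdiam : ∀ y z : X, G.dist y z ≤ D)
    (hbD : b D = 0) (f : ℕ → R) {y z : X} {i : ℕ} (hyz : G.dist y z = i) (hi : 1 ≤ i)
    (hiD : i ≤ D) :
    ∑ w with G.dist y w = 1, f (G.dist z w) = c i * f (i - 1) + a i * f i + b i * f (i + 1) := by
  rw [sum_filter_dist_eq_one_comp_dist f hyz hi, hp i 1 (i - 1) hiD (by omega) (by omega) y z hyz,
    hp i 1 i hiD (by omega) hiD y z hyz, ← hc i hiD, ← ha i hiD]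
  congr 2
  rcases hiD.lt_or_eq with hlt | rfl
  · rw [hp i 1 (i + 1) hiD (by omega) hlt y z hyz, hb i hiD]
  · rw [hbD, filter_eq_empty_iff.mpr fun w _ h => by have := hdiam z w; omega, card_empty,
      Nat.cast_zero]

theorem c_add_a_add_b_eq_b_zero (hconn : G.Connected) (hD : 1 ≤ D)
    (hdiam : ∀ y z : X, G.dist y z ≤ D) (hbD : b D = 0) {y z : X} (hyz : G.dist y z = D)
    {i : ℕ} (hi : 1 ≤ i) (hiD : i ≤ D) : c i + a i + b i = b 0 := by
  obtain ⟨u, hu⟩ := hconn.exists_dist_eq_of_le (y := y) (z := z) (i := i) (by omega)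
  have hsum := sum_filter_dist_eq_one_comp_dist_eq_intersection hp hc ha hb hdiam hbD
    (fun _ => 1) hu hi hiD
  rw [sum_const, nsmul_eq_mul, mul_one, card_filter_dist_eq_one hp hD, ← hb 0 (by omega)] at hsum
  simpa only [mul_one] using hsum.symm

theorem mulVec_comp_dist_eq_smul (hconn : G.Connected) (hD : 1 ≤ D)
    (hdiam : ∀ y z : X, G.dist y z ≤ D) (hbD : b D = 0) {θ : R} {σs : ℕ → R}
    (h₀ : b 0 * σs 1 = θ * σs 0)
    (hrec : ∀ i, 1 ≤ i → i ≤ D →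
      c i * σs (i - 1) + a i * σs i + b i * σs (i + 1) = θ * σs i) (y₀ : X) :
    (of fun y z => if G.dist y z = 1 then (1 : R) else 0) *ᵥ (fun v => σs (G.dist y₀ v)) =
      θ • fun v => σs (G.dist y₀ v) := by
  funext v
  simp only [mulVec, dotProduct, of_apply, ite_mul, one_mul, zero_mul, sum_ite, sum_const_zero,
    add_zero, Pi.smul_apply, smul_eq_mul]
  rcases Nat.eq_zero_or_pos (G.dist y₀ v) with hv | hpos
  · obtain rfl := hconn.dist_eq_zero_iff.mp hv
    rw [dist_self, ← h₀, sum_congr rfl fun w hw => by rw [(mem_filter.mp hw).2], sum_const,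
      nsmul_eq_mul, card_filter_dist_eq_one hp hD, hb 0 (by omega)]
  · rw [sum_filter_dist_eq_one_comp_dist_eq_intersection hp hc ha hb hdiam hbD _ dist_comm hpos
      (hdiam _ _)]
    exact hrec _ hpos (hdiam _ _)

end IntersectionNumbers

end SimpleGraph

theorem stmt_19_general (X : Type) [Fintype X]
    (G : SimpleGraph X) (hconn : G.Connected)
    (D : ℕ) (hD : 3 ≤ D)
    (hdiam : ∀ y z : X, G.dist y z ≤ D)
    (hdiam' : ∃ y z : X, G.dist y z = D)
    (p : ℕ → ℕ → ℕ → ℕ)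
    (hp : ∀ h i j, h ≤ D → i ≤ D → j ≤ D → ∀ y z : X, G.dist y z = h →
      (Finset.univ.filter fun w => G.dist y w = i ∧ G.dist z w = j).card = p h i j)
    (A : ℕ → Matrix X X ℝ)
    (hA : ∀ i, A i = Matrix.of fun y z => if G.dist y z = i then (1 : ℝ) else 0)
    (c a b : ℕ → ℝ)
    (hc : ∀ i ≤ D, c i = (p i 1 (i - 1) : ℝ))
    (ha : ∀ i ≤ D, a i = (p i 1 i : ℝ))
    (hb : ∀ i ≤ D, b i = (p i 1 (i + 1) : ℝ))
    (bp : ℤ) (hbp : bp ≠ 0) (α σ : ℝ)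
    (gb : ℕ → ℝ) (hgb : ∀ i, gb i = ∑ l ∈ Finset.range i, (bp : ℝ) ^ l)
    (hclass_c : ∀ i ≤ D, c i = gb i * (1 + α * gb (i - 1)))
    (hclass_b : ∀ i ≤ D, b i = (gb D - gb i) * (σ - α * gb i))
    (k θ : ℝ) (hk : k = b 0) (hθ : θ = b 1 / (bp : ℝ) - 1)
    (σs : ℕ → ℝ)
    (hσs : ∀ i, σs i = 1 + (θ / k - 1) * gb i * (bp : ℝ) ^ ((1 : ℤ) - (i : ℤ))) :
    σs 0 = 1 ∧ σs 1 = θ / k ∧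
    (∀ i, 1 ≤ i → i ≤ D - 1 →
      c i * σs (i - 1) + a i * σs i + b i * σs (i + 1) = θ * σs i) ∧
    (c D * σs (D - 1) + a D * σs D = θ * σs D) ∧
    ∃ w : X → ℝ, w ≠ 0 ∧ (A 1).mulVec w = θ • w := by
  obtain ⟨y₀, z₀, hy₀z₀⟩ := hdiam'
  have hβ : (bp : ℝ) ≠ 0 := Int.cast_ne_zero.mpr hbp
  obtain rfl : gb = fun i => ∑ l ∈ range i, (bp : ℝ) ^ l := funext hgb
  have hD₁ : 1 ≤ D := by omega
  have hθβ : θ * bp = b 1 - bp := by rw [hθ]; field_simp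
  have hbD : b D = 0 := by rw [hclass_b D le_rfl, sub_self, zero_mul]
  have hk₀ : k ≠ 0 := by
    rw [hk, hb 0 (by omega), Nat.cast_ne_zero]
    exact (G.intersection_zero_one_one_pos hp hconn hD₁ hy₀z₀).ne'
  have hrec : ∀ i, 1 ≤ i → i ≤ D →
      c i * σs (i - 1) + a i * σs i + b i * σs (i + 1) = θ * σs i := fun i hi hiD => by
    have hcab := G.c_add_a_add_b_eq_b_zero hp hc ha hb hconn hD₁ hdiam hbD hy₀z₀ hi hiD
    rw [show a i = k - c i - b i by rw [hk, ← hcab]; ring]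
    exact classical_cosine_recurrence hβ hk₀ σs hσs hi
      (hk ▸ classical_b_sub_mul_c hclass_c hclass_b hθβ hi hiD)
  have hσ₀ : σs 0 = 1 := by simp [hσs]
  have hσ₁ : σs 1 = θ / k := by simp [hσs]
  refine ⟨hσ₀, hσ₁, fun i hi hiD => hrec i hi (by omega), by simpa [hbD] using hrec D hD₁ le_rfl,
    fun v => σs (G.dist y₀ v), fun h => by simpa [hσ₀] using congrFun h y₀, ?_⟩
  rw [hA 1]
  refine G.mulVec_comp_dist_eq_smul hp hc ha hb hconn hD₁ hdiam hbD ?_ hrec y₀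
  rw [hσ₀, hσ₁, ← hk]
  field_simp

theorem stmt_19 (X : Type) [Fintype X] [DecidableEq X]
    (G : SimpleGraph X) (hconn : G.Connected)
    (D : ℕ) (hD : 3 ≤ D)
    (hdiam : ∀ y z : X, G.dist y z ≤ D)
    (hdiam' : ∃ y z : X, G.dist y z = D)
    (p : ℕ → ℕ → ℕ → ℕ)
    (hp : ∀ h i j, h ≤ D → i ≤ D → j ≤ D → ∀ y z : X, G.dist y z = h →
      (Finset.univ.filter fun w => G.dist y w = i ∧ G.dist z w = j).card = p h i j)
    (A : ℕ → Matrix X X ℝ)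
    (hA : ∀ i, A i = Matrix.of fun y z => if G.dist y z = i then (1 : ℝ) else 0)
    (c a b : ℕ → ℝ)
    (hc : ∀ i ≤ D, c i = (p i 1 (i - 1) : ℝ))
    (ha : ∀ i ≤ D, a i = (p i 1 i : ℝ))
    (hb : ∀ i ≤ D, b i = (p i 1 (i + 1) : ℝ))
    (bp : ℤ) (hbp : bp ≠ 0) (α σ : ℝ)
    (gb : ℕ → ℝ) (hgb : ∀ i, gb i = ∑ l ∈ Finset.range i, (bp : ℝ) ^ l)
    (hclass_c : ∀ i ≤ D, c i = gb i * (1 + α * gb (i - 1)))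
    (hclass_b : ∀ i ≤ D, b i = (gb D - gb i) * (σ - α * gb i))
    (k θ : ℝ) (hk : k = b 0) (hθ : θ = b 1 / (bp : ℝ) - 1)
    (σs : ℕ → ℝ)
    (hσs : ∀ i, σs i = 1 + (θ / k - 1) * gb i * (bp : ℝ) ^ ((1 : ℤ) - (i : ℤ))) :
    σs 0 = 1 ∧ σs 1 = θ / k ∧
    (∀ i, 1 ≤ i → i ≤ D - 1 →
      c i * σs (i - 1) + a i * σs i + b i * σs (i + 1) = θ * σs i) ∧
    (c D * σs (D - 1) + a D * σs D = θ * σs D) ∧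
    ∃ w : X → ℝ, w ≠ 0 ∧ (A 1).mulVec w = θ • w :=
  stmt_19_general X G hconn D hD hdiam hdiam' p hp A hA c a b hc ha hb bp hbp α σ gb hgb hclass_c
    hclass_b k θ hk hθ σs hσs
end
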